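/- For every pre-ordered Banach space (X, X⁺) there exists a free Banach lattice over (X, X⁺): there exist a Banach lattice F and a positive contraction j : X → F such that for every Banach lattice G and every positive contraction φ : X → G there exists a unique contractive vector lattice homomorphism φ̄ : F → G with φ̄ ∘ j = φ. -/

import Mathlib

/-- The class `NormedLatticeAddCommGroup` as it stood in Mathlib (Dec 2024); it has since been removed. -/
class NormedLatticeAddCommGroup (α : Type*) extends NormedAddCommGroup α, Lattice α where
  add_le_add_left : ∀ a b : α, a ≤ b → ∀ c : α, c + a ≤ c + b
  solid : ∀ a b : α, |a| ≤ |b| → ‖a‖ ≤ ‖b‖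

/-- A wedge in a real vector space. -/
def IsWedge {V : Type} [AddCommGroup V] [Module ℝ V] (C : Set V) : Prop :=
  0 ∈ C ∧ ∀ (a b : ℝ) (x y : V), 0 ≤ a → 0 ≤ b → x ∈ C → y ∈ C → a • x + b • y ∈ C

/-- The positive part of the dual unit ball of the pre-ordered Banach space `(X, C)`:
continuous linear functionals of norm at most 1 that are nonnegative on `C`. -/
def PosDualBall {X : Type} [NormedAddCommGroup X] [NormedSpace ℝ X] (C : Set X)
    (f : X →L[ℝ] ℝ) : Prop :=
  ‖f‖ ≤ 1 ∧ ∀ x ∈ C, 0 ≤ f x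

/-- `(j, F)` is a free Banach lattice over the pre-ordered Banach space `(X, C)`:
`j` is a positive contraction, and every positive contraction from `X` into a Banach
lattice factors uniquely through `j` via a contractive vector lattice homomorphism. -/
def IsFreeBanachLattice (X : Type) [NormedAddCommGroup X] [NormedSpace ℝ X]
    [CompleteSpace X] (C : Set X)
    (F : Type) [NormedLatticeAddCommGroup F] [NormedSpace ℝ F] [CompleteSpace F]
    (j : X →L[ℝ] F) : Prop :=
  ‖j‖ ≤ 1 ∧ (∀ x ∈ C, 0 ≤ j x) ∧
  ∀ (G : Type) [NormedLatticeAddCommGroup G] [NormedSpace ℝ G] [CompleteSpace G],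
    ∀ φ : X →L[ℝ] G, ‖φ‖ ≤ 1 → (∀ x ∈ C, 0 ≤ φ x) →
      ∃! ψ : F →L[ℝ] G, ‖ψ‖ ≤ 1 ∧ (∀ a b : F, ψ (a ⊔ b) = ψ a ⊔ ψ b) ∧
        ∀ x : X, ψ (j x) = φ x

/-- A bundled free Banach lattice over the pre-ordered Banach space `(X, C)`. -/
structure FreeBanachLatticeWitness (X : Type) [NormedAddCommGroup X] [NormedSpace ℝ X]
    [CompleteSpace X] (C : Set X) where
  F : Type
  [i1 : NormedLatticeAddCommGroup F]
  [i2 : NormedSpace ℝ F]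
  [i3 : CompleteSpace F]
  j : X →L[ℝ] F
  free : IsFreeBanachLattice X C F j

/-! Every positive contraction `φ : X → G` into a Banach lattice factors through the closed
vector sublattice of `G` generated by `φ(X)`. That sublattice is the closure of a set of size at
most `κ = #X + 𝔠`, so it has at most `κ ^ ℵ₀` elements and is isometrically lattice isomorphic
to a Banach lattice carried by a subset of one fixed set of that size. The positive contractions
into such "test" lattices therefore form a set, and `F` is the closed vector sublattice generated
by the diagonal image of `X` in the `ℓ^∞`-product of all test lattices. Projecting onto the
coordinate of a test lattice through which `φ` factors gives the extension of `φ`; it is unique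
because two continuous lattice homomorphisms that agree on `j(X)` agree on the closed sublattice
generated by `j(X)`. -/

instance NormedLatticeAddCommGroup.toIsOrderedAddMonoid {α : Type*}
    [NormedLatticeAddCommGroup α] : IsOrderedAddMonoid α where
  add_le_add_left a b h c := by
    simpa only [add_comm] using NormedLatticeAddCommGroup.add_le_add_left a b h c

instance NormedLatticeAddCommGroup.toHasSolidNorm {α : Type*}
    [NormedLatticeAddCommGroup α] : HasSolidNorm α :=
  ⟨fun _ _ => NormedLatticeAddCommGroup.solid _ _⟩

open scoped ENNReal

section LpInfty

variable {ι : Type} {E : ι → Type} [∀ i, NormedLatticeAddCommGroup (E i)]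

lemma Memℓp.sup_infty {f g : ∀ i, E i} (hf : Memℓp f ∞) (hg : Memℓp g ∞) :
    Memℓp (f ⊔ g) ∞ := by
  obtain ⟨A, hA⟩ := memℓp_infty_iff.1 hf
  obtain ⟨B, hB⟩ := memℓp_infty_iff.1 hg
  refine memℓp_infty ⟨A + B, Set.forall_mem_range.2 fun i => ?_⟩
  exact (norm_sup_le_add _ _).trans (add_le_add (hA ⟨i, rfl⟩) (hB ⟨i, rfl⟩))

lemma Memℓp.inf_infty {f g : ∀ i, E i} (hf : Memℓp f ∞) (hg : Memℓp g ∞) :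
    Memℓp (f ⊓ g) ∞ := by
  rw [← neg_neg (f ⊓ g), neg_inf]
  exact (hf.neg.sup_infty hg.neg).neg

instance : Lattice (PreLp E) := inferInstanceAs (Lattice (∀ i, E i))

noncomputable instance : Lattice (lp E ∞) :=
  Subtype.lattice (fun _ _ => Memℓp.sup_infty) (fun _ _ => Memℓp.inf_infty)

noncomputable instance : NormedLatticeAddCommGroup (lp E ∞) where
  add_le_add_left _ _ h c i := add_le_add_right (h i) (c i)
  solid _ b h := lp.norm_le_of_forall_le (norm_nonneg b) fun i =>
    (norm_le_norm_of_abs_le_abs (h i)).trans (lp.norm_apply_le_norm ENNReal.top_ne_zero b i)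

end LpInfty

section ClosedSublatticeSpan

variable {W : Type} [NormedLatticeAddCommGroup W] [NormedSpace ℝ W]

def closedSublatticeSpan (s : Set W) : Submodule ℝ W :=
  sInf {S | s ⊆ S ∧ SupClosed (S : Set W) ∧ IsClosed (S : Set W)}

lemma closedSublatticeSpan_le {s : Set W} {S : Submodule ℝ W} (hs : s ⊆ S)
    (hsup : SupClosed (S : Set W)) (hcl : IsClosed (S : Set W)) :
    closedSublatticeSpan s ≤ S :=
  sInf_le ⟨hs, hsup, hcl⟩

lemma subset_closedSublatticeSpan (s : Set W) : s ⊆ closedSublatticeSpan s :=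
  fun _ hx => Submodule.mem_sInf.2 fun _ hS => hS.1 hx

lemma supClosed_closedSublatticeSpan (s : Set W) :
    SupClosed (closedSublatticeSpan s : Set W) := fun _ ha _ hb =>
  Submodule.mem_sInf.2 fun S hS =>
    hS.2.1 (Submodule.mem_sInf.1 ha S hS) (Submodule.mem_sInf.1 hb S hS)

lemma infClosed_closedSublatticeSpan (s : Set W) :
    InfClosed (closedSublatticeSpan s : Set W) := fun a ha b hb => by
  rw [← neg_neg (a ⊓ b), neg_inf]
  exact neg_mem (supClosed_closedSublatticeSpan s (neg_mem ha) (neg_mem hb))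

lemma isClosed_closedSublatticeSpan (s : Set W) :
    IsClosed (closedSublatticeSpan s : Set W) := by
  rw [closedSublatticeSpan, Submodule.coe_sInf]
  exact isClosed_biInter fun _ hS => hS.2.2

noncomputable instance (s : Set W) : Lattice (closedSublatticeSpan s) :=
  Subtype.lattice (fun _ _ ha hb => supClosed_closedSublatticeSpan s ha hb)
    (fun _ _ ha hb => infClosed_closedSublatticeSpan s ha hb)

noncomputable instance (s : Set W) : NormedLatticeAddCommGroup (closedSublatticeSpan s) where
  add_le_add_left _ _ h c := add_le_add_right (α := W) h c
  solid _ _ h := norm_le_norm_of_abs_le_abs (α := W) h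

instance [CompleteSpace W] (s : Set W) : CompleteSpace (closedSublatticeSpan s) :=
  (isClosed_closedSublatticeSpan s).completeSpace_coe

lemma ContinuousLinearMap.eq_of_eqOn_closedSublatticeSpan {G : Type*} [TopologicalSpace G]
    [T2Space G] [AddCommGroup G] [Module ℝ G] [Lattice G] {s : Set W}
    {ψ ψ' : closedSublatticeSpan s →L[ℝ] G}
    (hψ : ∀ a b, ψ (a ⊔ b) = ψ a ⊔ ψ b) (hψ' : ∀ a b, ψ' (a ⊔ b) = ψ' a ⊔ ψ' b)
    (h : ∀ x (hx : x ∈ s), ψ ⟨x, subset_closedSublatticeSpan s hx⟩ =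
      ψ' ⟨x, subset_closedSublatticeSpan s hx⟩) :
    ψ = ψ' := by
  set K := (LinearMap.eqLocus (ψ : _ →ₗ[ℝ] G) ψ').map (closedSublatticeSpan s).subtype
  have hK : closedSublatticeSpan s ≤ K := by
    refine closedSublatticeSpan_le (fun x hx => ⟨_, h x hx, rfl⟩) ?_ ?_
    · rintro _ ⟨a, ha, rfl⟩ _ ⟨b, hb, rfl⟩
      refine ⟨a ⊔ b, show ψ (a ⊔ b) = ψ' (a ⊔ b) from ?_, rfl⟩
      rw [hψ, hψ', show ψ a = ψ' a from ha, show ψ b = ψ' b from hb]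
    · have hcl : IsClosed {a : closedSublatticeSpan s | ψ a = ψ' a} :=
        isClosed_eq ψ.continuous ψ'.continuous
      rw [Submodule.map_coe]
      exact (isClosed_closedSublatticeSpan s).isClosedEmbedding_subtypeVal.isClosedMap _ hcl
  ext a
  obtain ⟨b, hb, hba⟩ := hK a.2
  exact Subtype.ext hba ▸ hb

end ClosedSublatticeSpan

lemma SupClosed.closure {α : Type*} [TopologicalSpace α] [Lattice α] [ContinuousSup α]
    {s : Set α} (hs : SupClosed s) : SupClosed (closure s) := fun _ ha _ hb =>
  map_mem_closure₂ continuous_sup ha hb fun _ hx _ hy => hs hx hy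

section Cardinality

open Cardinal Filter Topology

lemma Cardinal.mk_closure_le_power {Y : Type} [TopologicalSpace Y] [FrechetUrysohnSpace Y]
    [T2Space Y] (A : Set Y) : #(closure A) ≤ #A ^ ℵ₀ := by
  have hseq : ∀ x : closure A, ∃ u : ℕ → A, Tendsto (fun n => (u n : Y)) atTop (𝓝 x) := by
    rintro ⟨x, hx⟩
    obtain ⟨u, huA, hu⟩ := mem_closure_iff_seq_limit.1 hx
    exact ⟨fun n => ⟨u n, huA n⟩, hu⟩
  choose u hu using hseq
  calc #(closure A) ≤ #(ℕ → A) :=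
        mk_le_of_injective (f := u) fun x y hxy =>
          Subtype.ext (tendsto_nhds_unique (hu x) (by rw [hxy]; exact hu y))
    _ = #A ^ ℵ₀ := by rw [← power_def, mk_nat]

variable {W : Type} [NormedLatticeAddCommGroup W] [NormedSpace ℝ W]

def sublatticeStage (s : Set W) : ℕ → Set W
  | 0 => insert 0 s
  | n + 1 =>
    sublatticeStage s n ∪ Set.image2 (· + ·) (sublatticeStage s n) (sublatticeStage s n)
      ∪ Set.image2 (· ⊔ ·) (sublatticeStage s n) (sublatticeStage s n)
      ∪ Set.image2 (· • ·) (Set.univ : Set ℝ) (sublatticeStage s n)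

lemma monotone_sublatticeStage (s : Set W) : Monotone (sublatticeStage s) :=
  monotone_nat_of_le_succ fun _ _ hx => Or.inl (Or.inl (Or.inl hx))

lemma exists_sublatticeStage_of_mem_of_mem {s : Set W} {a b : W} {m n : ℕ}
    (ha : a ∈ sublatticeStage s m) (hb : b ∈ sublatticeStage s n) :
    ∃ k, a ∈ sublatticeStage s k ∧ b ∈ sublatticeStage s k :=
  ⟨max m n, monotone_sublatticeStage s (le_max_left m n) ha,
    monotone_sublatticeStage s (le_max_right m n) hb⟩

def iUnionSublatticeStage (s : Set W) : Submodule ℝ W where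
  carrier := ⋃ n, sublatticeStage s n
  zero_mem' := Set.mem_iUnion.2 ⟨0, Set.mem_insert 0 s⟩
  add_mem' := by
    rintro a b ⟨_, ⟨m, rfl⟩, ha⟩ ⟨_, ⟨n, rfl⟩, hb⟩
    obtain ⟨k, ha, hb⟩ := exists_sublatticeStage_of_mem_of_mem ha hb
    exact Set.mem_iUnion.2 ⟨k + 1, Or.inl (Or.inl (Or.inr (Set.mem_image2_of_mem ha hb)))⟩
  smul_mem' := by
    rintro r a ⟨_, ⟨n, rfl⟩, ha⟩
    exact Set.mem_iUnion.2 ⟨n + 1, Or.inr (Set.mem_image2_of_mem (Set.mem_univ r) ha)⟩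

lemma supClosed_iUnionSublatticeStage (s : Set W) :
    SupClosed (iUnionSublatticeStage s : Set W) := by
  rintro a ⟨_, ⟨m, rfl⟩, ha⟩ b ⟨_, ⟨n, rfl⟩, hb⟩
  obtain ⟨k, ha, hb⟩ := exists_sublatticeStage_of_mem_of_mem ha hb
  exact Set.mem_iUnion.2 ⟨k + 1, Or.inl (Or.inr (Set.mem_image2_of_mem ha hb))⟩

lemma closedSublatticeSpan_le_topologicalClosure (s : Set W) :
    closedSublatticeSpan s ≤ (iUnionSublatticeStage s).topologicalClosure :=
  closedSublatticeSpan_le (fun _ hx => (iUnionSublatticeStage s).le_topologicalClosure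
      (Set.mem_iUnion.2 ⟨0, Set.mem_insert_of_mem 0 hx⟩))
    (supClosed_iUnionSublatticeStage s).closure
    (iUnionSublatticeStage s).isClosed_topologicalClosure

lemma mk_sublatticeStage_le {κ : Cardinal} (hκ : 𝔠 ≤ κ) {s : Set W} (hs : #s ≤ κ) (n : ℕ) :
    #(sublatticeStage s n) ≤ κ := by
  have hℵ₀ : ℵ₀ ≤ κ := aleph0_le_continuum.trans hκ
  induction n with
  | zero => exact mk_insert_le.trans (add_le_of_le hℵ₀ hs (one_le_aleph0.trans hℵ₀))
  | succ n ih =>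
    have himage2 : ∀ {U : Type} (f : U → W → W) (A : Set U), #A ≤ κ →
        #(Set.image2 f A (sublatticeStage s n)) ≤ κ :=
      fun _ _ hA => mk_image2_le.trans (mul_le_of_le hℵ₀ hA ih)
    refine (mk_union_le _ _).trans
      (add_le_of_le hℵ₀ ?_ (himage2 _ _ (mk_univ_real.trans_le hκ)))
    refine (mk_union_le _ _).trans (add_le_of_le hℵ₀ ?_ (himage2 _ _ ih))
    exact (mk_union_le _ _).trans (add_le_of_le hℵ₀ ih (himage2 _ _ ih))

lemma mk_closedSublatticeSpan_le {κ : Cardinal} (hκ : 𝔠 ≤ κ) {s : Set W} (hs : #s ≤ κ) :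
    #(closedSublatticeSpan s) ≤ κ ^ ℵ₀ := by
  have hℵ₀ : ℵ₀ ≤ κ := aleph0_le_continuum.trans hκ
  have hunion : #(iUnionSublatticeStage s) ≤ κ := by
    refine (mk_iUnion_le _).trans (mul_le_of_le hℵ₀ (mk_nat.trans_le hℵ₀) ?_)
    exact ciSup_le' fun n => mk_sublatticeStage_le hκ hs n
  calc #(closedSublatticeSpan s)
      ≤ #(closure (iUnionSublatticeStage s : Set W)) :=
        mk_le_mk_of_subset (closedSublatticeSpan_le_topologicalClosure s)
    _ ≤ κ ^ ℵ₀ := (mk_closure_le_power _).trans (power_le_power_right hunion)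

end Cardinality

section Transfer

variable {α β : Type} (e : α ≃ β) [NormedLatticeAddCommGroup β]

abbrev Equiv.normedLatticeAddCommGroup : NormedLatticeAddCommGroup α :=
  { e.normedAddCommGroup, e.lattice with
    add_le_add_left a b h c := by
      change e (e.symm (e c + e a)) ≤ e (e.symm (e c + e b))
      simpa only [e.apply_symm_apply] using add_le_add_right (α := β) h (e c)
    solid a b h := by
      change e (e.symm (e a ⊔ e (e.symm (-e a)))) ≤ e (e.symm (e b ⊔ e (e.symm (-e b)))) at h
      simp only [e.apply_symm_apply] at h
      exact norm_le_norm_of_abs_le_abs (α := β) h }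

variable [NormedSpace ℝ β]

noncomputable def Equiv.linearIsometryEquiv :
    letI := e.normedLatticeAddCommGroup
    letI := e.normedSpace ℝ
    α ≃ₗᵢ[ℝ] β :=
  letI := e.normedLatticeAddCommGroup
  letI := e.normedSpace ℝ
  { e.linearEquiv ℝ with norm_map' := fun _ => rfl }

end Transfer

structure BanachLatticeOn (Y : Type) where
  carrier : Set Y
  [normedLattice : NormedLatticeAddCommGroup carrier]
  [normedSpace : NormedSpace ℝ carrier]
  [completeSpace : CompleteSpace carrier]

attribute [instance] BanachLatticeOn.normedLattice BanachLatticeOn.normedSpace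
  BanachLatticeOn.completeSpace

open Cardinal in
lemma BanachLatticeOn.exists_linearIsometryEquiv {Y K : Type} [NormedLatticeAddCommGroup K]
    [NormedSpace ℝ K] [CompleteSpace K] (hK : #K ≤ #Y) :
    ∃ (L : BanachLatticeOn Y) (e : L.carrier ≃ₗᵢ[ℝ] K),
      (∀ a b, e (a ⊔ b) = e a ⊔ e b) ∧ ∀ a b, e a ≤ e b ↔ a ≤ b := by
  obtain ⟨f⟩ := hK
  let e : Set.range f ≃ K := (Equiv.ofInjective f f.injective).symm
  let := e.normedLatticeAddCommGroup
  let := e.normedSpace ℝ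
  have := e.linearIsometryEquiv.toIsometryEquiv.completeSpace
  exact ⟨⟨Set.range f⟩, e.linearIsometryEquiv, fun _ _ => e.apply_symm_apply _,
    fun _ _ => Iff.rfl⟩

section Construction

/- A `def` rather than an `abbrev`: otherwise a subset of `ℕ → X ⊕ ℝ` would inherit the
subspace topology, which is not the norm topology of a Banach lattice carried by it. -/
def TestCarrier (X : Type) : Type := ℕ → X ⊕ ℝ

variable (X : Type) [NormedAddCommGroup X] [NormedSpace ℝ X] (C : Set X)

structure TestMap where
  target : BanachLatticeOn (TestCarrier X)
  toFun : X →L[ℝ] target.carrier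
  norm_le : ‖toFun‖ ≤ 1
  nonneg : ∀ x ∈ C, 0 ≤ toFun x

variable {X C}

open Cardinal in
lemma TestMap.exists_factorization {G : Type} [NormedLatticeAddCommGroup G] [NormedSpace ℝ G]
    [CompleteSpace G] {φ : X →L[ℝ] G} (hφ : ‖φ‖ ≤ 1) (hpos : ∀ x ∈ C, 0 ≤ φ x) :
    ∃ (i : TestMap X C) (ρ : i.target.carrier →L[ℝ] G), ‖ρ‖ ≤ 1 ∧
      (∀ a b, ρ (a ⊔ b) = ρ a ⊔ ρ b) ∧ ∀ x, ρ (i.toFun x) = φ x := by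
  set K := closedSublatticeSpan (Set.range φ)
  have hK : #K ≤ #(TestCarrier X) := by
    change #K ≤ #(ℕ → X ⊕ ℝ)
    rw [← power_def, mk_nat]
    refine mk_closedSublatticeSpan_le (mk_real ▸ mk_le_of_injective Sum.inr_injective) ?_
    exact mk_range_le.trans (mk_le_of_injective Sum.inl_injective)
  obtain ⟨L, e, he_sup, he_le⟩ := BanachLatticeOn.exists_linearIsometryEquiv hK
  let φK : X →L[ℝ] K := φ.codRestrict K fun x => subset_closedSublatticeSpan _ ⟨x, rfl⟩
  let ψ : X →L[ℝ] L.carrier := e.symm.toLinearIsometry.toContinuousLinearMap.comp φK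
  have hψ : ∀ x, e (ψ x) = φK x := fun x => e.apply_symm_apply _
  refine ⟨⟨L, ψ, ?_, fun x hx => ?_⟩,
    (K.subtypeₗᵢ.comp e.toLinearIsometry).toContinuousLinearMap,
    LinearIsometry.norm_toContinuousLinearMap_le _,
    fun a b => congrArg Subtype.val (he_sup a b), fun x => congrArg Subtype.val (hψ x)⟩
  · refine ψ.opNorm_le_bound zero_le_one fun x => ?_
    rw [← e.norm_map, hψ]
    exact φ.le_of_opNorm_le hφ x
  · rw [← he_le, map_zero, hψ]
    exact hpos x hx

variable (X C)

abbrev FreeAmbient : Type := lp (fun i : TestMap X C => i.target.carrier) ∞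

noncomputable def toFreeAmbient : X →L[ℝ] FreeAmbient X C :=
  LinearMap.mkContinuous
    { toFun x := ⟨fun i => i.toFun x, memℓp_infty ⟨‖x‖, Set.forall_mem_range.2 fun i =>
        (i.toFun.le_of_opNorm_le i.norm_le x).trans_eq (one_mul _)⟩⟩
      map_add' _ _ := lp.ext (funext fun i => map_add i.toFun _ _)
      map_smul' _ _ := lp.ext (funext fun i => map_smul i.toFun _ _) }
    1 fun x => lp.norm_le_of_forall_le (by positivity) fun i => i.toFun.le_of_opNorm_le i.norm_le x

lemma norm_toFreeAmbient_le : ‖toFreeAmbient X C‖ ≤ 1 :=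
  LinearMap.mkContinuous_norm_le _ zero_le_one _

abbrev FreeBanachLattice : Type := closedSublatticeSpan (Set.range (toFreeAmbient X C))

noncomputable def FreeBanachLattice.of : X →L[ℝ] FreeBanachLattice X C :=
  (toFreeAmbient X C).codRestrict _ fun x => subset_closedSublatticeSpan _ ⟨x, rfl⟩

theorem FreeBanachLattice.isFreeBanachLattice [CompleteSpace X] :
    IsFreeBanachLattice X C (FreeBanachLattice X C) (FreeBanachLattice.of X C) := by
  refine ⟨(of X C).opNorm_le_bound zero_le_one fun x =>
      (toFreeAmbient X C).le_of_opNorm_le (norm_toFreeAmbient_le X C) x,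
    fun x hx i => i.nonneg x hx, fun G _ _ _ φ hφ hpos => ?_⟩
  obtain ⟨i, ρ, hρ, hρ_sup, hρφ⟩ := TestMap.exists_factorization hφ hpos
  let ψ : FreeBanachLattice X C →L[ℝ] G :=
    ρ.comp ((lp.evalCLM ℝ _ ∞ i).comp (Submodule.subtypeL _))
  have hψ_sup : ∀ a b, ψ (a ⊔ b) = ψ a ⊔ ψ b := fun a b => hρ_sup _ _
  refine ⟨ψ, ⟨?_, hψ_sup, hρφ⟩, fun ψ' ⟨_, hψ'_sup, hψ'φ⟩ => ?_⟩
  · refine ψ.opNorm_le_bound zero_le_one fun a => (ρ.le_of_opNorm_le hρ _).trans ?_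
    rw [one_mul, one_mul]
    exact lp.norm_apply_le_norm ENNReal.top_ne_zero _ i
  · refine ContinuousLinearMap.eq_of_eqOn_closedSublatticeSpan hψ'_sup hψ_sup ?_
    rintro _ ⟨x, rfl⟩
    exact (hψ'φ x).trans (hρφ x).symm

end Construction

theorem exists_free_banach_lattice_general
    (X : Type) [NormedAddCommGroup X] [NormedSpace ℝ X] [CompleteSpace X]
    (C : Set X) :
    Nonempty (FreeBanachLatticeWitness X C) :=
  ⟨⟨FreeBanachLattice X C, FreeBanachLattice.of X C,
    FreeBanachLattice.isFreeBanachLattice X C⟩⟩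

/-- Every pre-ordered Banach space admits a free Banach lattice over it. -/
theorem exists_free_banach_lattice
    (X : Type) [NormedAddCommGroup X] [NormedSpace ℝ X] [CompleteSpace X]
    (C : Set X) (hC : IsWedge C) :
    Nonempty (FreeBanachLatticeWitness X C) :=
  exists_free_banach_lattice_general X C
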